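/- Let E be a monoidal model category whose unit I is cofibrant, and let f : X → Y be a morphism between cofibrant objects of E such that for every fibrant object Z the induced map on internal homs f* : Z^Y → Z^X is a weak equivalence. Then f is a weak equivalence. -/

import Mathlib

/-!
STATEMENT 1:
Let E be a monoidal model category whose unit I is cofibrant, and let f : X → Y be a
morphism between cofibrant objects of E such that for every fibrant object Z the induced
map on internal homs f* : Z^Y → Z^X is a weak equivalence. Then f is a weak equivalence.
-/

universe v u

open CategoryTheory CategoryTheory.Limits CategoryTheory.MonoidalCategory

namespace Paper

variable {C : Type u} [Category.{v} C]

/-- `f` is a retract of `g` (as objects of the arrow category). -/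
def IsRetractOf {X Y X' Y' : C} (f : X ⟶ Y) (g : X' ⟶ Y') : Prop :=
  ∃ (i : Arrow.mk f ⟶ Arrow.mk g) (r : Arrow.mk g ⟶ Arrow.mk f), i ≫ r = 𝟙 _

/-- A (Quillen closed) model structure on a category `C`: three classes of morphisms
(weak equivalences, cofibrations, fibrations) satisfying two-out-of-three, closure
under retracts, the lifting axioms and the factorization axioms. -/
structure ModelStructure (C : Type u) [Category.{v} C] where
  W : MorphismProperty C
  Cof : MorphismProperty C
  Fib : MorphismProperty C
  w_comp : ∀ {X Y Z : C} (f : X ⟶ Y) (g : Y ⟶ Z), W f → W g → W (f ≫ g)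
  w_cancel_left : ∀ {X Y Z : C} (f : X ⟶ Y) (g : Y ⟶ Z), W f → W (f ≫ g) → W g
  w_cancel_right : ∀ {X Y Z : C} (f : X ⟶ Y) (g : Y ⟶ Z), W g → W (f ≫ g) → W f
  w_retract : ∀ {X Y X' Y' : C} (f : X ⟶ Y) (g : X' ⟶ Y'), IsRetractOf f g → W g → W f
  cof_retract : ∀ {X Y X' Y' : C} (f : X ⟶ Y) (g : X' ⟶ Y'), IsRetractOf f g → Cof g → Cof f
  fib_retract : ∀ {X Y X' Y' : C} (f : X ⟶ Y) (g : X' ⟶ Y'), IsRetractOf f g → Fib g → Fib f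
  lift_cof_trivFib : ∀ {A B X Y : C} (i : A ⟶ B) (p : X ⟶ Y),
    Cof i → Fib p → W p → HasLiftingProperty i p
  lift_trivCof_fib : ∀ {A B X Y : C} (i : A ⟶ B) (p : X ⟶ Y),
    Cof i → W i → Fib p → HasLiftingProperty i p
  factor_cof_trivFib : ∀ {X Y : C} (f : X ⟶ Y),
    ∃ (Z : C) (i : X ⟶ Z) (p : Z ⟶ Y), Cof i ∧ Fib p ∧ W p ∧ i ≫ p = f
  factor_trivCof_fib : ∀ {X Y : C} (f : X ⟶ Y),
    ∃ (Z : C) (i : X ⟶ Z) (p : Z ⟶ Y), Cof i ∧ W i ∧ Fib p ∧ i ≫ p = f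

/-- An object is cofibrant if the map from the initial object is a cofibration. -/
def ModelStructure.Cofibrant [HasInitial C] (M : ModelStructure C) (X : C) : Prop :=
  M.Cof (initial.to X)

/-- An object is fibrant if the map to the terminal object is a fibration. -/
def ModelStructure.Fibrant [HasTerminal C] (M : ModelStructure C) (X : C) : Prop :=
  M.Fib (terminal.from X)

section Monoidal

variable [MonoidalCategory C] [HasPushouts C]

/-- The pushout-product of `f : X ⟶ Y` and `g : X' ⟶ Y'`:
the induced map `(X ⊗ Y') ∪_{X ⊗ X'} (Y ⊗ X') ⟶ Y ⊗ Y'`. -/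
noncomputable def pushoutProduct {X Y X' Y' : C} (f : X ⟶ Y) (g : X' ⟶ Y') :
    pushout (f ▷ X') (X ◁ g) ⟶ Y ⊗ Y' :=
  pushout.desc (Y ◁ g) (f ▷ Y') (whisker_exchange f g).symm

/-- The pushout-product axiom: a model structure on a closed symmetric monoidal
category is a monoidal model structure if the pushout-product of two cofibrations
is a cofibration, which is trivial as soon as one of the two is. -/
structure IsMonoidalModel (M : ModelStructure C) : Prop where
  pp_cof : ∀ {X Y X' Y' : C} (f : X ⟶ Y) (g : X' ⟶ Y'),
    M.Cof f → M.Cof g → M.Cof (pushoutProduct f g)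
  pp_weq : ∀ {X Y X' Y' : C} (f : X ⟶ Y) (g : X' ⟶ Y'),
    M.Cof f → M.Cof g → (M.W f ∨ M.W g) → M.W (pushoutProduct f g)

end Monoidal

section Aux

variable {C : Type u} [Category.{v} C]

lemma isRetractOf_mk {X Y X' Y' : C} {f : X ⟶ Y} {g : X' ⟶ Y'}
    (a : X ⟶ X') (b : Y ⟶ Y') (a' : X' ⟶ X) (b' : Y' ⟶ Y)
    (h1 : a ≫ g = f ≫ b) (h2 : a' ≫ f = g ≫ b')
    (h3 : a ≫ a' = 𝟙 X) (h4 : b ≫ b' = 𝟙 Y) : IsRetractOf f g :=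
  ⟨Arrow.homMk' a b h1, Arrow.homMk' a' b' h2,
    Arrow.hom_ext _ _ (by simp [h3]) (by simp [h4])⟩

variable (M : ModelStructure C)

lemma ModelStructure.w_id (X : C) : M.W (𝟙 X) := by
  obtain ⟨Z, i, p, hi, hp, hpw, hip⟩ := M.factor_cof_trivFib (𝟙 X)
  exact M.w_retract _ p
    (isRetractOf_mk i (𝟙 X) p (𝟙 X) (by simp [hip]) (by simp) hip (by simp)) hpw

lemma ModelStructure.fib_id (X : C) : M.Fib (𝟙 X) := by
  obtain ⟨Z, i, p, hi, hp, hpw, hip⟩ := M.factor_cof_trivFib (𝟙 X)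
  exact M.fib_retract _ p
    (isRetractOf_mk i (𝟙 X) p (𝟙 X) (by simp [hip]) (by simp) hip (by simp)) hp

lemma ModelStructure.cof_id (X : C) : M.Cof (𝟙 X) := by
  obtain ⟨Z, i, p, hi, hiw, hp, hip⟩ := M.factor_trivCof_fib (𝟙 X)
  exact M.cof_retract _ i
    (isRetractOf_mk (𝟙 X) i (𝟙 X) p (by simp) (by simp [hip]) (by simp) hip) hi

lemma isRetractOf_iso_comp {X' X Y : C} (e : X' ⟶ X) [IsIso e] (g : X ⟶ Y) :
    IsRetractOf (e ≫ g) g :=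
  isRetractOf_mk e (𝟙 Y) (inv e) (𝟙 Y) (by simp) (by simp) (by simp) (by simp)

lemma ModelStructure.w_iso_comp {X' X Y : C} (e : X' ⟶ X) [IsIso e] {g : X ⟶ Y}
    (hg : M.W g) : M.W (e ≫ g) :=
  M.w_retract _ g (isRetractOf_iso_comp e g) hg

lemma ModelStructure.cof_iso_comp {X' X Y : C} (e : X' ⟶ X) [IsIso e] {g : X ⟶ Y}
    (hg : M.Cof g) : M.Cof (e ≫ g) :=
  M.cof_retract _ g (isRetractOf_iso_comp e g) hg

/-- Retract argument: LLP against trivial fibrations gives a cofibration. -/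
lemma ModelStructure.cof_of_llp {A B : C} {f : A ⟶ B}
    (h : ∀ {U V : C} (p : U ⟶ V), M.Fib p → M.W p → HasLiftingProperty f p) :
    M.Cof f := by
  obtain ⟨Z, i, p, hi, hp, hpw, hip⟩ := M.factor_cof_trivFib f
  haveI := h p hp hpw
  have sq : CommSq i f p (𝟙 B) := ⟨by simp [hip]⟩
  exact M.cof_retract f i
    (isRetractOf_mk (𝟙 A) sq.lift (𝟙 A) p (by simp [sq.fac_left]) (by simp [hip])
      (by simp) sq.fac_right) hi

/-- Retract argument: LLP against fibrations gives a trivial cofibration. -/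
lemma ModelStructure.trivCof_of_llp {A B : C} {f : A ⟶ B}
    (h : ∀ {U V : C} (p : U ⟶ V), M.Fib p → HasLiftingProperty f p) :
    M.Cof f ∧ M.W f := by
  obtain ⟨Z, i, p, hi, hiw, hp, hip⟩ := M.factor_trivCof_fib f
  haveI := h p hp
  have sq : CommSq i f p (𝟙 B) := ⟨by simp [hip]⟩
  have hr : IsRetractOf f i := isRetractOf_mk (𝟙 A) sq.lift (𝟙 A) p (by simp [sq.fac_left])
    (by simp [hip]) (by simp) sq.fac_right
  exact ⟨M.cof_retract f i hr hi, M.w_retract f i hr hiw⟩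

/-- Retract argument: RLP against cofibrations gives a trivial fibration. -/
lemma ModelStructure.trivFib_of_rlp {U V : C} {p : U ⟶ V}
    (h : ∀ {A B : C} (i : A ⟶ B), M.Cof i → HasLiftingProperty i p) :
    M.Fib p ∧ M.W p := by
  obtain ⟨Z, i, q, hi, hq, hqw, hiq⟩ := M.factor_cof_trivFib p
  haveI := h i hi
  have sq : CommSq (𝟙 U) i p q := ⟨by simp [hiq]⟩
  have hr : IsRetractOf p q := isRetractOf_mk i (𝟙 V) sq.lift (𝟙 V) (by simp [hiq])
    (by simp [sq.fac_right]) sq.fac_left (by simp)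
  exact ⟨M.fib_retract p q hr hq, M.w_retract p q hr hqw⟩

/-- Retract argument: RLP against trivial cofibrations gives a fibration. -/
lemma ModelStructure.fib_of_rlp {U V : C} {p : U ⟶ V}
    (h : ∀ {A B : C} (i : A ⟶ B), M.Cof i → M.W i → HasLiftingProperty i p) :
    M.Fib p := by
  obtain ⟨Z, i, q, hi, hiw, hq, hiq⟩ := M.factor_trivCof_fib p
  haveI := h i hi hiw
  have sq : CommSq (𝟙 U) i p q := ⟨by simp [hiq]⟩
  exact M.fib_retract p q
    (isRetractOf_mk i (𝟙 V) sq.lift (𝟙 V) (by simp [hiq]) (by simp [sq.fac_right])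
      sq.fac_left (by simp)) hq

lemma ModelStructure.cof_comp {X Y Z : C} {f : X ⟶ Y} {g : Y ⟶ Z}
    (hf : M.Cof f) (hg : M.Cof g) : M.Cof (f ≫ g) := by
  apply M.cof_of_llp
  intro U V p hp hpw
  haveI := M.lift_cof_trivFib f p hf hp hpw
  haveI := M.lift_cof_trivFib g p hg hp hpw
  infer_instance

lemma ModelStructure.fib_comp {X Y Z : C} {f : X ⟶ Y} {g : Y ⟶ Z}
    (hf : M.Fib f) (hg : M.Fib g) : M.Fib (f ≫ g) := by
  apply M.fib_of_rlp
  intro A B i hi hiw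
  haveI := M.lift_trivCof_fib i f hi hiw hf
  haveI := M.lift_trivCof_fib i g hi hiw hg
  infer_instance

section Push
variable [HasPushouts C]

lemma ModelStructure.cof_pushout_inl {X Y Z : C} (f : X ⟶ Y) (g : X ⟶ Z)
    (hg : M.Cof g) : M.Cof (pushout.inl f g) := by
  apply M.cof_of_llp
  intro U V p hp hpw
  constructor
  intro t b sq
  haveI := M.lift_cof_trivFib g p hg hp hpw
  have sq2 : CommSq (f ≫ t) g p (pushout.inr f g ≫ b) :=
    ⟨by rw [Category.assoc, sq.w, ← Category.assoc, pushout.condition, Category.assoc]⟩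
  exact CommSq.HasLift.mk'
    ⟨pushout.desc t sq2.lift sq2.fac_left.symm, by simp [pushout.inl_desc, pushout.inr_desc, pushout.inl_desc_assoc, pushout.inr_desc_assoc],
      pushout.hom_ext (by simpa [pushout.inl_desc, pushout.inr_desc, pushout.inl_desc_assoc, pushout.inr_desc_assoc] using sq.w) (by simpa [pushout.inl_desc, pushout.inr_desc, pushout.inl_desc_assoc, pushout.inr_desc_assoc] using sq2.fac_right)⟩

lemma ModelStructure.cof_pushout_inr {X Y Z : C} (f : X ⟶ Y) (g : X ⟶ Z)
    (hf : M.Cof f) : M.Cof (pushout.inr f g) := by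
  apply M.cof_of_llp
  intro U V p hp hpw
  constructor
  intro t b sq
  haveI := M.lift_cof_trivFib f p hf hp hpw
  have sq2 : CommSq (g ≫ t) f p (pushout.inl f g ≫ b) :=
    ⟨by rw [Category.assoc, sq.w, ← Category.assoc, ← pushout.condition, Category.assoc]⟩
  exact CommSq.HasLift.mk'
    ⟨pushout.desc sq2.lift t sq2.fac_left, by simp [pushout.inl_desc, pushout.inr_desc, pushout.inl_desc_assoc, pushout.inr_desc_assoc],
      pushout.hom_ext (by simpa [pushout.inl_desc, pushout.inr_desc, pushout.inl_desc_assoc, pushout.inr_desc_assoc] using sq2.fac_right) (by simpa [pushout.inl_desc, pushout.inr_desc, pushout.inl_desc_assoc, pushout.inr_desc_assoc] using sq.w)⟩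

lemma ModelStructure.trivCof_pushout_inl {X Y Z : C} (f : X ⟶ Y) (g : X ⟶ Z)
    (hg : M.Cof g) (hgw : M.W g) : M.Cof (pushout.inl f g) ∧ M.W (pushout.inl f g) := by
  apply M.trivCof_of_llp
  intro U V p hp
  constructor
  intro t b sq
  haveI := M.lift_trivCof_fib g p hg hgw hp
  have sq2 : CommSq (f ≫ t) g p (pushout.inr f g ≫ b) :=
    ⟨by rw [Category.assoc, sq.w, ← Category.assoc, pushout.condition, Category.assoc]⟩
  exact CommSq.HasLift.mk'
    ⟨pushout.desc t sq2.lift sq2.fac_left.symm, by simp [pushout.inl_desc, pushout.inr_desc, pushout.inl_desc_assoc, pushout.inr_desc_assoc],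
      pushout.hom_ext (by simpa [pushout.inl_desc, pushout.inr_desc, pushout.inl_desc_assoc, pushout.inr_desc_assoc] using sq.w) (by simpa [pushout.inl_desc, pushout.inr_desc, pushout.inl_desc_assoc, pushout.inr_desc_assoc] using sq2.fac_right)⟩

end Push

section InitTerm
variable [HasInitial C]

lemma ModelStructure.cofibrant_of_cof {X Y : C} (hX : M.Cofibrant X) {i : X ⟶ Y}
    (hi : M.Cof i) : M.Cofibrant Y := by
  have : initial.to Y = initial.to X ≫ i := initial.hom_ext _ _
  rw [ModelStructure.Cofibrant, this]
  exact M.cof_comp hX hi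

end InitTerm

section Term
variable [HasTerminal C]

lemma ModelStructure.fibrant_of_fib {U V : C} (hU : M.Fibrant U) {p : V ⟶ U}
    (hp : M.Fib p) : M.Fibrant V := by
  have : terminal.from V = p ≫ terminal.from U := terminal.hom_ext _ _
  rw [ModelStructure.Fibrant, this]
  exact M.fib_comp hp hU

lemma ModelStructure.exists_fibrant_repl (X : C) :
    ∃ (RX : C) (jX : X ⟶ RX), M.Cof jX ∧ M.W jX ∧ M.Fibrant RX := by
  obtain ⟨RX, j, p, hj, hjw, hp, _⟩ := M.factor_trivCof_fib (terminal.from X)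
  refine ⟨RX, j, hj, hjw, ?_⟩
  have : terminal.from RX = p := terminal.hom_ext _ _
  rw [ModelStructure.Fibrant, this]
  exact hp

end Term

end Aux

section WIso
variable {C : Type u} [Category.{v} C] (M : ModelStructure C)

lemma ModelStructure.w_of_iso {X Y : C} (e : X ⟶ Y) [IsIso e] : M.W e := by
  have := M.w_iso_comp e (M.w_id Y)
  simpa using this

end WIso
section AuxMonoidal

open MonoidalClosed

variable {C : Type u} [Category.{v} C] [MonoidalCategory C] [SymmetricCategory C]
  [MonoidalClosed C] [HasPushouts C] [HasInitial C] [HasTerminal C]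

/-- `S ⊗ ⊥` is initial. -/
noncomputable def isInitialTensorRight (S : C) : IsInitial (S ⊗ (⊥_ C)) :=
  IsInitial.ofUniqueHom (fun Y => uncurry (initial.to ((ihom S).obj Y)))
    (fun Y m => by
      have h : curry m = initial.to ((ihom S).obj Y) := initial.hom_ext _ _
      rw [← h, uncurry_curry])

/-- `⊥ ⊗ S` is initial. -/
noncomputable def isInitialTensorLeft (S : C) : IsInitial ((⊥_ C) ⊗ S) :=
  (isInitialTensorRight S).ofIso (β_ S (⊥_ C))

variable (M : ModelStructure C)

lemma ModelStructure.tensorLeft_cof (hM : IsMonoidalModel M) {A S S' : C}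
    (hA : M.Cofibrant A) {g : S ⟶ S'} (hg : M.Cof g) :
    M.Cof (A ◁ g) ∧ (M.W g → M.W (A ◁ g)) := by
  have h0 := isInitialTensorLeft (C := C) S
  have h1 := isInitialTensorLeft (C := C) S'
  haveI : IsIso ((⊥_ C) ◁ g) :=
    ⟨h1.to _, h0.hom_ext _ _, h1.hom_ext _ _⟩
  set f := initial.to A with hf
  have hcond : (f ▷ S) ≫ (𝟙 (A ⊗ S)) = ((⊥_ C) ◁ g) ≫ (inv ((⊥_ C) ◁ g) ≫ (f ▷ S)) := by
    simp
  haveI : IsIso (pushout.inl (f ▷ S) ((⊥_ C) ◁ g)) := by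
    refine ⟨pushout.desc (𝟙 _) (inv ((⊥_ C) ◁ g) ≫ (f ▷ S)) hcond, by simp [pushout.inl_desc, pushout.inr_desc, pushout.inl_desc_assoc, pushout.inr_desc_assoc], ?_⟩
    apply pushout.hom_ext
    · simp [pushout.inl_desc, pushout.inr_desc, pushout.inl_desc_assoc, pushout.inr_desc_assoc]
    · rw [← Category.assoc, pushout.inr_desc, Category.assoc, pushout.condition,
        IsIso.inv_hom_id_assoc, Category.comp_id]
  have hin : pushout.inl (f ▷ S) ((⊥_ C) ◁ g) ≫ pushoutProduct f g = A ◁ g := by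
    simp [pushoutProduct, pushout.inl_desc, pushout.inr_desc, pushout.inl_desc_assoc, pushout.inr_desc_assoc]
  constructor
  · rw [← hin]
    exact M.cof_iso_comp _ (hM.pp_cof f g hA hg)
  · intro hgw
    rw [← hin]
    exact M.w_iso_comp _ (hM.pp_weq f g hA hg (Or.inr hgw))

lemma uncurry_comp_pre {A' B' Z S : C} (j : A' ⟶ B') (x : S ⟶ (ihom B').obj Z) :
    uncurry (x ≫ (MonoidalClosed.pre j).app Z) = (j ▷ S) ≫ uncurry x := by
  rw [uncurry_natural_left, MonoidalClosed.uncurry_pre, uncurry_eq, ← Category.assoc,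
    whisker_exchange, Category.assoc]

/-- hom(trivial cofibration, fibrant) is a trivial fibration. -/
lemma ModelStructure.pre_trivCof (hM : IsMonoidalModel M) {A' B' Z : C} {j : A' ⟶ B'}
    (hj : M.Cof j) (hjw : M.W j) (hZ : M.Fibrant Z) :
    M.Fib ((MonoidalClosed.pre j).app Z) ∧ M.W ((MonoidalClosed.pre j).app Z) := by
  apply M.trivFib_of_rlp
  intro S S' g hg
  constructor
  intro t b sq
  have hcond : (j ▷ S) ≫ uncurry t = (A' ◁ g) ≫ uncurry b := by
    rw [← uncurry_comp_pre, sq.w, uncurry_natural_left]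
  haveI := M.lift_trivCof_fib (pushoutProduct j g) (terminal.from Z)
    (hM.pp_cof j g hj hg) (hM.pp_weq j g hj hg (Or.inl hjw)) hZ
  have sq2 : CommSq (pushout.desc (uncurry t) (uncurry b) hcond)
      (pushoutProduct j g) (terminal.from Z) (terminal.from _) := ⟨terminal.hom_ext _ _⟩
  refine CommSq.HasLift.mk' ⟨curry sq2.lift, ?_, ?_⟩
  · have : (B' ◁ g) ≫ sq2.lift = uncurry t := by
      have h1 : pushout.inl _ _ ≫ pushoutProduct j g = B' ◁ g := by simp [pushoutProduct, pushout.inl_desc, pushout.inr_desc, pushout.inl_desc_assoc, pushout.inr_desc_assoc]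
      rw [← h1, Category.assoc, sq2.fac_left, pushout.inl_desc]
    rw [← curry_natural_left, this, curry_uncurry]
  · apply uncurry_injective
    have h2 : pushout.inr _ _ ≫ pushoutProduct j g = j ▷ S' := by simp [pushoutProduct, pushout.inl_desc, pushout.inr_desc, pushout.inl_desc_assoc, pushout.inr_desc_assoc]
    rw [uncurry_comp_pre, MonoidalClosed.uncurry_curry, ← h2, Category.assoc, sq2.fac_left,
      pushout.inr_desc]

/-- internal hom of a cofibrant into a fibrant is fibrant. -/
lemma ModelStructure.ihom_fibrant (hM : IsMonoidalModel M) {A Z : C}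
    (hA : M.Cofibrant A) (hZ : M.Fibrant Z) : M.Fibrant ((ihom A).obj Z) := by
  apply M.fib_of_rlp
  intro S S' g hg hgw
  constructor
  intro t b sq
  obtain ⟨hc, hw⟩ := M.tensorLeft_cof hM hA hg
  haveI := M.lift_trivCof_fib (A ◁ g) (terminal.from Z) hc (hw hgw) hZ
  have sq2 : CommSq (uncurry t) (A ◁ g) (terminal.from Z) (terminal.from _) :=
    ⟨terminal.hom_ext _ _⟩
  refine CommSq.HasLift.mk' ⟨curry sq2.lift, ?_, terminal.hom_ext _ _⟩
  rw [← curry_natural_left, sq2.fac_left, curry_uncurry]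

/-- Ken Brown: hom(weak equivalence between cofibrants, fibrant) is a weak equivalence. -/
lemma ModelStructure.pre_w (hM : IsMonoidalModel M) {A B : C} {w : A ⟶ B}
    (hw : M.W w) (hA : M.Cofibrant A) (hB : M.Cofibrant B)
    {Z : C} (hZ : M.Fibrant Z) : M.W ((MonoidalClosed.pre w).app Z) := by
  set φ := pushout.desc w (𝟙 B) (initial.hom_ext _ _ :
    (initial.to A) ≫ w = (initial.to B) ≫ 𝟙 B)
  obtain ⟨Mid, q, r, hq, hrf, hrw, hqr⟩ := M.factor_cof_trivFib φ
  set s := pushout.inl (initial.to A) (initial.to B) ≫ q with hs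
  set t := pushout.inr (initial.to A) (initial.to B) ≫ q with ht
  have hsc : M.Cof s := M.cof_comp (M.cof_pushout_inl _ _ hB) hq
  have htc : M.Cof t := M.cof_comp (M.cof_pushout_inr _ _ hA) hq
  have hsr : s ≫ r = w := by rw [hs, Category.assoc, hqr]; simp [φ, pushout.inl_desc, pushout.inr_desc, pushout.inl_desc_assoc, pushout.inr_desc_assoc]
  have htr : t ≫ r = 𝟙 B := by rw [ht, Category.assoc, hqr]; simp [φ, pushout.inl_desc, pushout.inr_desc, pushout.inl_desc_assoc, pushout.inr_desc_assoc]
  have hsw : M.W s := M.w_cancel_right s r hrw (by rw [hsr]; exact hw)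
  have htw : M.W t := M.w_cancel_right t r hrw (by rw [htr]; exact M.w_id B)
  have h1 : M.W ((MonoidalClosed.pre s).app Z) := (M.pre_trivCof hM hsc hsw hZ).2
  have h2 : M.W ((MonoidalClosed.pre t).app Z) := (M.pre_trivCof hM htc htw hZ).2
  have e1 : (MonoidalClosed.pre r).app Z ≫ (MonoidalClosed.pre t).app Z = 𝟙 _ := by
    rw [← NatTrans.comp_app, ← MonoidalClosed.pre_map, htr, MonoidalClosed.pre_id]
    rfl
  have hrpre : M.W ((MonoidalClosed.pre r).app Z) :=
    M.w_cancel_right _ ((MonoidalClosed.pre t).app Z) h2 (by rw [e1]; exact M.w_id _)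
  have e2 : (MonoidalClosed.pre w).app Z
      = (MonoidalClosed.pre r).app Z ≫ (MonoidalClosed.pre s).app Z := by
    rw [← NatTrans.comp_app, ← MonoidalClosed.pre_map, hsr]
  rw [e2]
  exact M.w_comp _ _ hrpre h1

end AuxMonoidal
section AuxCyl

open MonoidalClosed

variable {C : Type u} [Category.{v} C] [HasPushouts C] [HasInitial C] [HasTerminal C]

/-- A good cylinder object for `A`. -/
structure CylData (M : ModelStructure C) (A : C) where
  Cy : C
  ι₀ : A ⟶ Cy
  ι₁ : A ⟶ Cy
  σ : Cy ⟶ A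
  inC : pushout (initial.to A) (initial.to A) ⟶ Cy
  inl_inC : pushout.inl _ _ ≫ inC = ι₀
  inr_inC : pushout.inr _ _ ≫ inC = ι₁
  cof_inC : M.Cof inC
  fib_σ : M.Fib σ
  w_σ : M.W σ
  ι₀σ : ι₀ ≫ σ = 𝟙 A
  ι₁σ : ι₁ ≫ σ = 𝟙 A
  cof_ι₀ : M.Cof ι₀
  cof_ι₁ : M.Cof ι₁
  w_ι₀ : M.W ι₀
  w_ι₁ : M.W ι₁

variable (M : ModelStructure C)

lemma ModelStructure.exists_cylData {A : C} (hA : M.Cofibrant A) :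
    Nonempty (CylData M A) := by
  set fold : pushout (initial.to A) (initial.to A) ⟶ A := pushout.desc (𝟙 A) (𝟙 A) rfl with hfold
  obtain ⟨Cy, inC, σ, hin, hσf, hσw, he⟩ := M.factor_cof_trivFib fold
  have hι₀σ : (pushout.inl _ _ ≫ inC) ≫ σ = 𝟙 A := by
    rw [Category.assoc, he, hfold, pushout.inl_desc]
  have hι₁σ : (pushout.inr _ _ ≫ inC) ≫ σ = 𝟙 A := by
    rw [Category.assoc, he, hfold, pushout.inr_desc]
  exact ⟨{
    Cy := Cy, ι₀ := _, ι₁ := _, σ := σ, inC := inC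
    inl_inC := rfl, inr_inC := rfl
    cof_inC := hin, fib_σ := hσf, w_σ := hσw
    ι₀σ := hι₀σ, ι₁σ := hι₁σ
    cof_ι₀ := M.cof_comp (M.cof_pushout_inl _ _ hA) hin
    cof_ι₁ := M.cof_comp (M.cof_pushout_inr _ _ hA) hin
    w_ι₀ := M.w_cancel_right _ σ hσw (by rw [hι₀σ]; exact M.w_id A)
    w_ι₁ := M.w_cancel_right _ σ hσw (by rw [hι₁σ]; exact M.w_id A) }⟩

/-- Two maps out of the target of a trivial cofibration which agree on the source
are "homotopic" via a relative cylinder. -/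
lemma ModelStructure.lemE {P T Z' : C} {c : P ⟶ T} (hc : M.Cof c) (hcw : M.W c)
    (hZ : M.Fibrant Z') (u v : T ⟶ Z') (huv : c ≫ u = c ≫ v) :
    ∃ (Cc : C) (e₀ e₁ : T ⟶ Cc) (s : Cc ⟶ T) (H : Cc ⟶ Z'),
      M.Fib s ∧ M.W s ∧ e₀ ≫ s = 𝟙 T ∧ e₁ ≫ s = 𝟙 T ∧ e₀ ≫ H = u ∧ e₁ ≫ H = v := by
  set codiag : pushout c c ⟶ T := pushout.desc (𝟙 T) (𝟙 T) rfl with hcodiag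
  obtain ⟨Cc, q, s, hq, hsf, hsw, hqs⟩ := M.factor_cof_trivFib (codiag : pushout c c ⟶ T)
  have hd₀ : pushout.inl c c ≫ codiag = 𝟙 T := by rw [hcodiag, pushout.inl_desc]
  have hd₁ : pushout.inr c c ≫ codiag = 𝟙 T := by rw [hcodiag, pushout.inr_desc]
  have hWd₀ : M.W (pushout.inl c c) := (M.trivCof_pushout_inl c c hc hcw).2
  have hWcodiag : M.W codiag :=
    M.w_cancel_left _ codiag hWd₀ (by rw [hd₀]; exact M.w_id T)
  have hWq : M.W q := M.w_cancel_right q s hsw (by rw [hqs]; exact hWcodiag)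
  haveI := M.lift_trivCof_fib q (terminal.from Z') hq hWq hZ
  have sq : CommSq (pushout.desc u v huv) q (terminal.from Z') (terminal.from Cc) :=
    ⟨terminal.hom_ext _ _⟩
  refine ⟨Cc, pushout.inl c c ≫ q, pushout.inr c c ≫ q, s, sq.lift, hsf, hsw, ?_, ?_, ?_, ?_⟩
  · rw [Category.assoc, hqs, hd₀]
  · rw [Category.assoc, hqs, hd₁]
  · rw [Category.assoc, sq.fac_left, pushout.inl_desc]
  · rw [Category.assoc, sq.fac_left, pushout.inr_desc]

variable {I : C}

/-- Surjectivity up to homotopy along a weak equivalence of fibrant objects. -/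
lemma ModelStructure.lemS (hI : M.Cof (initial.to I)) (cy : CylData M I)
    {V U : C} {w : V ⟶ U} (hw : M.W w) (hV : M.Fibrant V) (hU : M.Fibrant U)
    (a : I ⟶ U) :
    ∃ (b : I ⟶ V) (H : cy.Cy ⟶ U), cy.ι₀ ≫ H = b ≫ w ∧ cy.ι₁ ≫ H = a := by
  obtain ⟨V', c, p, hcc, hcw, hpf, hcp⟩ := M.factor_trivCof_fib w
  have hpw : M.W p := M.w_cancel_left c p hcw (by rw [hcp]; exact hw)
  have hV' : M.Fibrant V' := M.fibrant_of_fib hU hpf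
  haveI := M.lift_cof_trivFib (initial.to I) p hI hpf hpw
  have sq1 : CommSq (initial.to V') (initial.to I) p a := ⟨initial.hom_ext _ _⟩
  set b' := sq1.lift with hb'
  have hb'p : b' ≫ p = a := sq1.fac_right
  haveI := M.lift_trivCof_fib c (terminal.from V) hcc hcw hV
  have sq2 : CommSq (𝟙 V) c (terminal.from V) (terminal.from V') := ⟨terminal.hom_ext _ _⟩
  set r := sq2.lift with hr
  have hcr : c ≫ r = 𝟙 V := sq2.fac_left
  obtain ⟨Cc, e₀, e₁, s, HE, hsf, hsw, he₀s, he₁s, he₀H, he₁H⟩ :=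
    M.lemE hcc hcw hV' (r ≫ c) (𝟙 V')
      (by rw [← Category.assoc, hcr, Category.id_comp, Category.comp_id])
  haveI := M.lift_cof_trivFib cy.inC s cy.cof_inC hsf hsw
  have sq3 : CommSq (pushout.desc (b' ≫ e₀) (b' ≫ e₁) (initial.hom_ext _ _))
      cy.inC s (cy.σ ≫ b') := ⟨by
    apply pushout.hom_ext
    · rw [← Category.assoc, pushout.inl_desc, Category.assoc, he₀s, Category.comp_id,
        ← Category.assoc, ← Category.assoc, cy.inl_inC, Category.assoc, ← Category.assoc,
        cy.ι₀σ, Category.id_comp]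
    · rw [← Category.assoc, pushout.inr_desc, Category.assoc, he₁s, Category.comp_id,
        ← Category.assoc, ← Category.assoc, cy.inr_inC, Category.assoc, ← Category.assoc,
        cy.ι₁σ, Category.id_comp]⟩
  set L := sq3.lift with hL
  have hι₀L : cy.ι₀ ≫ L = b' ≫ e₀ := by
    rw [← cy.inl_inC, Category.assoc, sq3.fac_left, pushout.inl_desc]
  have hι₁L : cy.ι₁ ≫ L = b' ≫ e₁ := by
    rw [← cy.inr_inC, Category.assoc, sq3.fac_left, pushout.inr_desc]
  refine ⟨b' ≫ r, L ≫ HE ≫ p, ?_, ?_⟩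
  · rw [← Category.assoc, hι₀L, Category.assoc, Category.assoc, ← Category.assoc e₀, he₀H,
      ← hcp]
    simp only [Category.assoc]
  · rw [← Category.assoc, hι₁L, Category.assoc, ← Category.assoc e₁, he₁H, Category.id_comp,
      hb'p]

/-- Injectivity up to homotopy along a weak equivalence of fibrant objects. -/
lemma ModelStructure.lemInj (cy : CylData M I)
    {V U : C} {w : V ⟶ U} (hw : M.W w) (hV : M.Fibrant V) (hU : M.Fibrant U)
    (b₀ b₁ : I ⟶ V) (K : cy.Cy ⟶ U)
    (hK₀ : cy.ι₀ ≫ K = b₀ ≫ w) (hK₁ : cy.ι₁ ≫ K = b₁ ≫ w) :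
    ∃ K' : cy.Cy ⟶ V, cy.ι₀ ≫ K' = b₀ ∧ cy.ι₁ ≫ K' = b₁ := by
  obtain ⟨V', c, p, hcc, hcw, hpf, hcp⟩ := M.factor_trivCof_fib w
  have hpw : M.W p := M.w_cancel_left c p hcw (by rw [hcp]; exact hw)
  haveI := M.lift_trivCof_fib c (terminal.from V) hcc hcw hV
  have sq2 : CommSq (𝟙 V) c (terminal.from V) (terminal.from V') := ⟨terminal.hom_ext _ _⟩
  set r := sq2.lift with hr
  have hcr : c ≫ r = 𝟙 V := sq2.fac_left
  haveI := M.lift_cof_trivFib cy.inC p cy.cof_inC hpf hpw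
  have sq : CommSq (pushout.desc (b₀ ≫ c) (b₁ ≫ c) (initial.hom_ext _ _)) cy.inC p K := ⟨by
    apply pushout.hom_ext
    · rw [← Category.assoc, pushout.inl_desc, Category.assoc, hcp, ← Category.assoc,
        cy.inl_inC, hK₀]
    · rw [← Category.assoc, pushout.inr_desc, Category.assoc, hcp, ← Category.assoc,
        cy.inr_inC, hK₁]⟩
  have h0 : cy.ι₀ ≫ sq.lift = b₀ ≫ c := by
    rw [← cy.inl_inC, Category.assoc, sq.fac_left, pushout.inl_desc]
  have h1 : cy.ι₁ ≫ sq.lift = b₁ ≫ c := by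
    rw [← cy.inr_inC, Category.assoc, sq.fac_left, pushout.inr_desc]
  refine ⟨sq.lift ≫ r, ?_, ?_⟩
  · rw [← Category.assoc, h0, Category.assoc, hcr, Category.comp_id]
  · rw [← Category.assoc, h1, Category.assoc, hcr, Category.comp_id]

end AuxCyl
section AuxMain

open MonoidalClosed

variable {C : Type u} [Category.{v} C] [MonoidalCategory C] [SymmetricCategory C]
  [MonoidalClosed C] [HasPushouts C] [HasInitial C] [HasTerminal C]

/-- The transpose `I ⟶ Z^A` of a map `A ⟶ Z`. -/
noncomputable def transp {A Z : C} (a : A ⟶ Z) : 𝟙_ C ⟶ (ihom A).obj Z :=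
  curry ((ρ_ A).hom ≫ a)

lemma uncurry_transp {A Z : C} (a : A ⟶ Z) :
    uncurry (transp a) = (ρ_ A).hom ≫ a := uncurry_curry _

lemma transp_comp_pre {P Q Z : C} (i : P ⟶ Q) (a : Q ⟶ Z) :
    transp a ≫ (MonoidalClosed.pre i).app Z = transp (i ≫ a) := by
  apply uncurry_injective
  rw [uncurry_comp_pre, uncurry_transp, uncurry_transp, ← Category.assoc,
    MonoidalCategory.rightUnitor_naturality, Category.assoc]

variable (M : ModelStructure C)

/-- The key construction: a map from a cofibrant object to a fibrant object extends,
on the nose, along a cofibration satisfying the internal-hom condition. -/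
lemma ModelStructure.lemRB (hM : IsMonoidalModel M) (hI : M.Cofibrant (𝟙_ C))
    (cy : CylData M (𝟙_ C)) {A B Z : C} {i : A ⟶ B} (hi : M.Cof i)
    (hA : M.Cofibrant A) (hB : M.Cofibrant B) (hZ : M.Fibrant Z)
    (hcond : M.W ((MonoidalClosed.pre i).app Z)) (j : A ⟶ Z) :
    ∃ g : B ⟶ Z, i ≫ g = j := by
  have hVf : M.Fibrant ((ihom B).obj Z) := M.ihom_fibrant hM hB hZ
  have hUf : M.Fibrant ((ihom A).obj Z) := M.ihom_fibrant hM hA hZ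
  obtain ⟨b, H₀, h0, h1⟩ := M.lemS hI cy hcond hVf hUf (transp j)
  set g' : B ⟶ Z := (ρ_ B).inv ≫ uncurry b with hg'
  have hb : transp g' = b := by
    rw [transp, hg', Iso.hom_inv_id_assoc, curry_uncurry]
  have h0' : cy.ι₀ ≫ H₀ = transp (i ≫ g') := by
    rw [h0, ← hb, transp_comp_pre]
  set H := uncurry H₀ with hH
  have hH0 : (A ◁ cy.ι₀) ≫ H = (ρ_ A).hom ≫ i ≫ g' := by
    rw [hH, ← uncurry_natural_left, h0', uncurry_transp]
  have hH1 : (A ◁ cy.ι₁) ≫ H = (ρ_ A).hom ≫ j := by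
    rw [hH, ← uncurry_natural_left, h1, uncurry_transp]
  have hcond2 : (i ▷ 𝟙_ C) ≫ ((ρ_ B).hom ≫ g') = (A ◁ cy.ι₀) ≫ H := by
    rw [hH0, ← Category.assoc, MonoidalCategory.rightUnitor_naturality, Category.assoc]
  haveI := M.lift_trivCof_fib (pushoutProduct i cy.ι₀) (terminal.from Z)
    (hM.pp_cof i cy.ι₀ hi cy.cof_ι₀) (hM.pp_weq i cy.ι₀ hi cy.cof_ι₀ (Or.inr cy.w_ι₀)) hZ
  have sq : CommSq (pushout.desc ((ρ_ B).hom ≫ g') H hcond2) (pushoutProduct i cy.ι₀)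
      (terminal.from Z) (terminal.from _) := ⟨terminal.hom_ext _ _⟩
  have hinr : pushout.inr _ _ ≫ pushoutProduct i cy.ι₀ = i ▷ cy.Cy := by
    simp [pushoutProduct, pushout.inl_desc, pushout.inr_desc, pushout.inl_desc_assoc, pushout.inr_desc_assoc]
  have hiCy : (i ▷ cy.Cy) ≫ sq.lift = H := by
    rw [← hinr, Category.assoc, sq.fac_left, pushout.inr_desc]
  refine ⟨(ρ_ B).inv ≫ (B ◁ cy.ι₁) ≫ sq.lift, ?_⟩
  have e1 : i ≫ (ρ_ B).inv = (ρ_ A).inv ≫ (i ▷ 𝟙_ C) :=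
    MonoidalCategory.rightUnitor_inv_naturality i
  have e2 : (i ▷ 𝟙_ C) ≫ (B ◁ cy.ι₁) = (A ◁ cy.ι₁) ≫ (i ▷ cy.Cy) :=
    (MonoidalCategory.whisker_exchange i cy.ι₁).symm
  calc i ≫ (ρ_ B).inv ≫ (B ◁ cy.ι₁) ≫ sq.lift
      = (ρ_ A).inv ≫ (i ▷ 𝟙_ C) ≫ (B ◁ cy.ι₁) ≫ sq.lift := by
        rw [← Category.assoc, e1, Category.assoc]
    _ = (ρ_ A).inv ≫ (A ◁ cy.ι₁) ≫ (i ▷ cy.Cy) ≫ sq.lift := by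
        rw [← Category.assoc (i ▷ 𝟙_ C), e2]; simp only [Category.assoc]
    _ = (ρ_ A).inv ≫ (A ◁ cy.ι₁) ≫ H := by rw [hiCy]
    _ = j := by rw [hH1, Iso.inv_hom_id_assoc]

/-- Transfer of the internal-hom condition through a `(cof, triv fib)` factorization. -/
lemma ModelStructure.cond_of_left (hM : IsMonoidalModel M) {X Y' Y : C}
    {i : X ⟶ Y'} {p : Y' ⟶ Y} (hp : M.W p) (hY' : M.Cofibrant Y') (hY : M.Cofibrant Y)
    (h : ∀ Z : C, M.Fibrant Z → M.W ((MonoidalClosed.pre (i ≫ p)).app Z)) :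
    ∀ Z : C, M.Fibrant Z → M.W ((MonoidalClosed.pre i).app Z) := by
  intro Z hZ
  have hp' : M.W ((MonoidalClosed.pre p).app Z) := M.pre_w hM hp hY' hY hZ
  refine M.w_cancel_left ((MonoidalClosed.pre p).app Z) _ hp' ?_
  rw [← NatTrans.comp_app, ← MonoidalClosed.pre_map]
  exact h Z hZ

/-- Transfer of the internal-hom condition to a strict extension. -/
lemma ModelStructure.cond_of_right (hM : IsMonoidalModel M) {X Y' Y : C}
    {i : X ⟶ Y'} {g : Y' ⟶ Y} (hj : M.W (i ≫ g)) (hX : M.Cofibrant X)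
    (hY : M.Cofibrant Y)
    (hi : ∀ Z : C, M.Fibrant Z → M.W ((MonoidalClosed.pre i).app Z)) :
    ∀ Z : C, M.Fibrant Z → M.W ((MonoidalClosed.pre g).app Z) := by
  intro Z hZ
  refine M.w_cancel_right _ ((MonoidalClosed.pre i).app Z) (hi Z hZ) ?_
  rw [← NatTrans.comp_app, ← MonoidalClosed.pre_map]
  exact M.pre_w hM hj hX hY hZ

end AuxMain



theorem statement₁ {C : Type u} [Category.{v} C] [MonoidalCategory C]
    [SymmetricCategory C] [MonoidalClosed C] [HasPushouts C]
    [HasInitial C] [HasTerminal C]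
    (M : ModelStructure C) (hM : IsMonoidalModel M)
    (hI : M.Cofibrant (𝟙_ C))
    {X Y : C} (f : X ⟶ Y) (hX : M.Cofibrant X) (hY : M.Cofibrant Y)
    (h : ∀ Z : C, M.Fibrant Z → M.W ((MonoidalClosed.pre f).app Z)) :
    M.W f := by
  obtain ⟨cy⟩ := M.exists_cylData hI
  -- Step 1: factor f as a cofibration followed by a trivial fibration.
  obtain ⟨Y₁, i₁, p₁, hi₁, hp₁f, hp₁w, he₁⟩ := M.factor_cof_trivFib f
  have hY₁ : M.Cofibrant Y₁ := M.cofibrant_of_cof hX hi₁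
  have cond₁ : ∀ Z : C, M.Fibrant Z → M.W ((MonoidalClosed.pre i₁).app Z) :=
    M.cond_of_left hM hp₁w hY₁ hY (fun Z hZ => by rw [he₁]; exact h Z hZ)
  rw [← he₁]
  refine M.w_comp _ _ ?_ hp₁w
  -- Step 2: extend a fibrant replacement of X along i₁.
  obtain ⟨RX, jX, hjXc, hjXw, hRXf⟩ := M.exists_fibrant_repl X
  have hRXc : M.Cofibrant RX := M.cofibrant_of_cof hX hjXc
  obtain ⟨g, hg⟩ := M.lemRB hM hI cy hi₁ hX hY₁ hRXf (cond₁ RX hRXf) jX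
  have condg := M.cond_of_right hM (by rw [hg]; exact hjXw) hX hRXc cond₁
  refine M.w_cancel_right i₁ g ?_ (by rw [hg]; exact hjXw)
  -- Step 3: factor g.
  obtain ⟨Y₂, i₂, p₂, hi₂, hp₂f, hp₂w, he₂⟩ := M.factor_cof_trivFib g
  have hY₂c : M.Cofibrant Y₂ := M.cofibrant_of_cof hY₁ hi₂
  have hY₂f : M.Fibrant Y₂ := M.fibrant_of_fib hRXf hp₂f
  have cond₂ : ∀ Z : C, M.Fibrant Z → M.W ((MonoidalClosed.pre i₂).app Z) :=
    M.cond_of_left hM hp₂w hY₂c hRXc (fun Z hZ => by rw [he₂]; exact condg Z hZ)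
  rw [← he₂]
  refine M.w_comp _ _ ?_ hp₂w
  -- Step 4: extend a fibrant replacement of Y₁ along i₂.
  obtain ⟨RY₁, jY, hjYc, hjYw, hRY₁f⟩ := M.exists_fibrant_repl Y₁
  have hRY₁c : M.Cofibrant RY₁ := M.cofibrant_of_cof hY₁ hjYc
  obtain ⟨g₂, hg₂⟩ := M.lemRB hM hI cy hi₂ hY₁ hY₂c hRY₁f (cond₂ RY₁ hRY₁f) jY
  have condg₂ := M.cond_of_right hM (by rw [hg₂]; exact hjYw) hY₁ hRY₁c cond₂
  refine M.w_cancel_right i₂ g₂ ?_ (by rw [hg₂]; exact hjYw)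
  -- Step 5: factor g₂; now i₃ is a cofibration between fibrant-cofibrant objects.
  obtain ⟨Y₃, i₃, p₃, hi₃, hp₃f, hp₃w, he₃⟩ := M.factor_cof_trivFib g₂
  have hY₃c : M.Cofibrant Y₃ := M.cofibrant_of_cof hY₂c hi₃
  have hY₃f : M.Fibrant Y₃ := M.fibrant_of_fib hRY₁f hp₃f
  have cond₃ : ∀ Z : C, M.Fibrant Z → M.W ((MonoidalClosed.pre i₃).app Z) :=
    M.cond_of_left hM hp₃w hY₃c hRY₁c (fun Z hZ => by rw [he₃]; exact condg₂ Z hZ)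
  rw [← he₃]
  refine M.w_comp _ _ ?_ hp₃w
  -- Core: i₃ : Y₂ ⟶ Y₃ admits a strict retraction k.
  obtain ⟨k, hk⟩ := M.lemRB hM hI cy hi₃ hY₂c hY₃c hY₂f (cond₃ Y₂ hY₂f) (𝟙 Y₂)
  have hu' : M.W ((MonoidalClosed.pre i₃).app Y₃) := cond₃ Y₃ hY₃f
  have hb0 : transp (k ≫ i₃) ≫ (MonoidalClosed.pre i₃).app Y₃ = transp i₃ := by
    rw [transp_comp_pre, ← Category.assoc, hk, Category.id_comp]
  have hb1 : transp (𝟙 Y₃) ≫ (MonoidalClosed.pre i₃).app Y₃ = transp i₃ := by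
    rw [transp_comp_pre, Category.comp_id]
  obtain ⟨K', hK'₀, hK'₁⟩ := M.lemInj cy hu' (M.ihom_fibrant hM hY₃c hY₃f)
    (M.ihom_fibrant hM hY₂c hY₃f) (transp (k ≫ i₃)) (transp (𝟙 Y₃))
    (cy.σ ≫ transp i₃)
    (by rw [← Category.assoc, cy.ι₀σ, Category.id_comp, hb0])
    (by rw [← Category.assoc, cy.ι₁σ, Category.id_comp, hb1])
  set H := MonoidalClosed.uncurry K' with hH
  have he₀H : (Y₃ ◁ cy.ι₀) ≫ H = (ρ_ Y₃).hom ≫ (k ≫ i₃) := by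
    rw [hH, ← MonoidalClosed.uncurry_natural_left, hK'₀, uncurry_transp]
  have he₁H : (Y₃ ◁ cy.ι₁) ≫ H = (ρ_ Y₃).hom := by
    rw [hH, ← MonoidalClosed.uncurry_natural_left, hK'₁, uncurry_transp, Category.comp_id]
  have hWe₀ : M.W (Y₃ ◁ cy.ι₀) := (M.tensorLeft_cof hM hY₃c cy.cof_ι₀).2 cy.w_ι₀
  have hWe₁ : M.W (Y₃ ◁ cy.ι₁) := (M.tensorLeft_cof hM hY₃c cy.cof_ι₁).2 cy.w_ι₁
  have hWH : M.W H := M.w_cancel_left _ H hWe₁ (by rw [he₁H]; exact M.w_of_iso _)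
  have hWki : M.W (k ≫ i₃) := by
    have h1 : M.W ((ρ_ Y₃).hom ≫ (k ≫ i₃)) := by
      rw [← he₀H]; exact M.w_comp _ _ hWe₀ hWH
    exact M.w_cancel_left (ρ_ Y₃).hom _ (M.w_of_iso _) h1
  exact M.w_retract i₃ (k ≫ i₃)
    (isRetractOf_mk i₃ (𝟙 Y₃) k (𝟙 Y₃)
      (by rw [← Category.assoc, hk, Category.id_comp, Category.comp_id])
      (by rw [Category.comp_id]) hk (by simp)) hWki

end Paper
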